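/- With λᵢ(R,θ) defined as λ₀ = 1/4 + R cos θ/2 + R² cos(2θ)/4, λ₁ = 1/4 + R sin θ/2 − R² cos(2θ)/4, λ₂ = 1/4 − R sin θ/2 − R² cos(2θ)/4, λ₃ = 1/4 − R cos θ/2 + R² cos(2θ)/4, all positive, and H({λᵢ}) = −Σᵢ λᵢ log₂ λᵢ, h the binary entropy, the partial derivative with respect to R of h(λ₀+λ₁) − H({λ₀,λ₁,λ₂,λ₃}) equals log₂(λ₀/λ₁)·(cos θ − sin θ)/2, and this is nonnegative whenever 0 ≤ θ ≤ π/4 and λ₀ ≥ λ₁ > 0. -/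

import Mathlib

/-!
Write `λᵢ' = ∂λᵢ/∂R` and `Lᵢ = log₂ λᵢ`. Since `∑ λᵢ' = 0`, differentiating the entropies
leaves `(log₂(λ₂+λ₃) − log₂(λ₀+λ₁))(λ₀'+λ₁') + ∑ Lᵢ λᵢ'`. The eigenvalues factor as
`λ₀λ₃ = λ₁λ₂` (because `cos 2θ = cos²θ − sin²θ`), so `L₀ + L₃ = L₁ + L₂` and
`(λ₂+λ₃)/(λ₀+λ₁) = λ₂/λ₀`; with these relations the derivative collapses to
`(L₀ − L₁)(cos θ − sin θ)/2`. On `[0, π/4]` we have `cos θ ≥ sin θ`, and `λ₀ ≥ λ₁` gives `L₀ ≥ L₁`.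
-/

open Real

/-- Binary Shannon entropy (base 2). -/
noncomputable def binEnt (p : ℝ) : ℝ :=
  -(p * Real.logb 2 p) - (1 - p) * Real.logb 2 (1 - p)

/-- Eigenvalues of the Bell-diagonal state with `δ = R²cos(2θ)/4`. -/
noncomputable def lam0 (θ r : ℝ) : ℝ := 1 / 4 + r * Real.cos θ / 2 + r ^ 2 * Real.cos (2 * θ) / 4
noncomputable def lam1 (θ r : ℝ) : ℝ := 1 / 4 + r * Real.sin θ / 2 - r ^ 2 * Real.cos (2 * θ) / 4
noncomputable def lam2 (θ r : ℝ) : ℝ := 1 / 4 - r * Real.sin θ / 2 - r ^ 2 * Real.cos (2 * θ) / 4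
noncomputable def lam3 (θ r : ℝ) : ℝ := 1 / 4 - r * Real.cos θ / 2 + r ^ 2 * Real.cos (2 * θ) / 4

/-- Shannon entropy (base 2) of the four eigenvalues. -/
noncomputable def entFour (θ r : ℝ) : ℝ :=
  -(lam0 θ r * Real.logb 2 (lam0 θ r)) - lam1 θ r * Real.logb 2 (lam1 θ r)
    - lam2 θ r * Real.logb 2 (lam2 θ r) - lam3 θ r * Real.logb 2 (lam3 θ r)

lemma HasDerivAt.self_mul_logb {b : ℝ} {f : ℝ → ℝ} {f' x : ℝ} (hf : HasDerivAt f f' x)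
    (hx : f x ≠ 0) :
    HasDerivAt (fun t => f t * logb b (f t)) ((logb b (f x) + 1 / Real.log b) * f') x := by
  have h := hf.mul (((hasDerivAt_log hx).comp x hf).div_const (Real.log b))
  refine h.congr_deriv ?_
  simp only [Function.comp_apply, logb]
  field_simp

lemma HasDerivAt.binEnt {p : ℝ → ℝ} {p' x : ℝ} (hp : HasDerivAt p p' x)
    (h₀ : p x ≠ 0) (h₁ : 1 - p x ≠ 0) :
    HasDerivAt (fun t => binEnt (p t)) ((logb 2 (1 - p x) - logb 2 (p x)) * p') x := by
  have h := (hp.self_mul_logb (b := 2) h₀).neg.sub ((hp.const_sub 1).self_mul_logb (b := 2) h₁)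
  exact h.congr_deriv (by ring)

lemma logb_add_logb_of_mul_eq_mul {b a₀ a₁ a₂ a₃ : ℝ} (h₀ : a₀ ≠ 0) (h₁ : a₁ ≠ 0)
    (h₂ : a₂ ≠ 0) (h₃ : a₃ ≠ 0) (h : a₀ * a₃ = a₁ * a₂) :
    logb b a₀ + logb b a₃ = logb b a₁ + logb b a₂ := by
  rw [← logb_mul h₀ h₃, ← logb_mul h₁ h₂, h]

lemma logb_add_sub_logb_add_of_mul_eq_mul {b a₀ a₁ a₂ a₃ : ℝ} (h₀ : 0 < a₀) (h₁ : 0 < a₁)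
    (h₂ : 0 < a₂) (h₃ : 0 < a₃) (h : a₀ * a₃ = a₁ * a₂) :
    logb b (a₂ + a₃) - logb b (a₀ + a₁) = logb b a₂ - logb b a₀ := by
  have h' : (a₂ + a₃) * a₀ = a₂ * (a₀ + a₁) := by linear_combination h
  rw [sub_eq_sub_iff_add_eq_add, ← logb_mul (by positivity) h₀.ne',
    ← logb_mul h₂.ne' (by positivity), h']

lemma sin_le_cos_of_nonneg_of_le_pi_div_four {θ : ℝ} (h₀ : 0 ≤ θ) (h : θ ≤ π / 4) :
    sin θ ≤ cos θ := by
  rw [← sin_pi_div_two_sub]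
  exact sin_le_sin_of_le_of_le_pi_div_two (by linarith [pi_pos]) (by linarith) (by linarith)

section Eigenvalues

variable (θ r : ℝ)

lemma lam2_add_lam3 : lam2 θ r + lam3 θ r = 1 - (lam0 θ r + lam1 θ r) := by
  unfold lam0 lam1 lam2 lam3
  ring

lemma lam0_mul_lam3 : lam0 θ r * lam3 θ r = lam1 θ r * lam2 θ r := by
  unfold lam0 lam1 lam2 lam3
  rw [cos_two_mul']
  ring

lemma hasDerivAt_lam0 : HasDerivAt (lam0 θ) (cos θ / 2 + r * cos (2 * θ) / 2) r := by
  have h := ((((hasDerivAt_id r).mul_const (cos θ)).div_const 2).const_add (1 / 4)).add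
    (((hasDerivAt_pow 2 r).mul_const (cos (2 * θ))).div_const 4)
  exact h.congr_deriv (by ring)

lemma hasDerivAt_lam1 : HasDerivAt (lam1 θ) (sin θ / 2 - r * cos (2 * θ) / 2) r := by
  have h := ((((hasDerivAt_id r).mul_const (sin θ)).div_const 2).const_add (1 / 4)).sub
    (((hasDerivAt_pow 2 r).mul_const (cos (2 * θ))).div_const 4)
  exact h.congr_deriv (by ring)

lemma hasDerivAt_lam2 : HasDerivAt (lam2 θ) (-(sin θ / 2) - r * cos (2 * θ) / 2) r := by
  have h := ((((hasDerivAt_id r).mul_const (sin θ)).div_const 2).const_sub (1 / 4)).sub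
    (((hasDerivAt_pow 2 r).mul_const (cos (2 * θ))).div_const 4)
  exact h.congr_deriv (by ring)

lemma hasDerivAt_lam3 : HasDerivAt (lam3 θ) (-(cos θ / 2) + r * cos (2 * θ) / 2) r := by
  have h := ((((hasDerivAt_id r).mul_const (cos θ)).div_const 2).const_sub (1 / 4)).add
    (((hasDerivAt_pow 2 r).mul_const (cos (2 * θ))).div_const 4)
  exact h.congr_deriv (by ring)

lemma hasDerivAt_entFour (h₀ : lam0 θ r ≠ 0) (h₁ : lam1 θ r ≠ 0) (h₂ : lam2 θ r ≠ 0)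
    (h₃ : lam3 θ r ≠ 0) :
    HasDerivAt (entFour θ)
      (-(logb 2 (lam0 θ r) * (cos θ / 2 + r * cos (2 * θ) / 2)
        + logb 2 (lam1 θ r) * (sin θ / 2 - r * cos (2 * θ) / 2)
        + logb 2 (lam2 θ r) * (-(sin θ / 2) - r * cos (2 * θ) / 2)
        + logb 2 (lam3 θ r) * (-(cos θ / 2) + r * cos (2 * θ) / 2))) r := by
  have h : HasDerivAt (entFour θ) _ r := (((hasDerivAt_lam0 θ r).self_mul_logb h₀).neg.sub
    ((hasDerivAt_lam1 θ r).self_mul_logb h₁)).sub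
    ((hasDerivAt_lam2 θ r).self_mul_logb h₂) |>.sub ((hasDerivAt_lam3 θ r).self_mul_logb h₃)
  exact h.congr_deriv (by ring)

lemma hasDerivAt_binEnt_sub_entFour (h₀ : 0 < lam0 θ r) (h₁ : 0 < lam1 θ r)
    (h₂ : 0 < lam2 θ r) (h₃ : 0 < lam3 θ r) :
    HasDerivAt (fun r => binEnt (lam0 θ r + lam1 θ r) - entFour θ r)
      (logb 2 (lam0 θ r / lam1 θ r) * (cos θ - sin θ) / 2) r := by
  have hP : 1 - (lam0 θ r + lam1 θ r) ≠ 0 := by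
    rw [← lam2_add_lam3]
    exact (add_pos h₂ h₃).ne'
  have hbin := ((hasDerivAt_lam0 θ r).fun_add (hasDerivAt_lam1 θ r)).binEnt (add_pos h₀ h₁).ne' hP
  have h := hbin.sub (hasDerivAt_entFour θ r h₀.ne' h₁.ne' h₂.ne' h₃.ne')
  refine h.congr_deriv ?_
  have hprod := lam0_mul_lam3 θ r
  have hsum := logb_add_logb_of_mul_eq_mul (b := 2) h₀.ne' h₁.ne' h₂.ne' h₃.ne' hprod
  have hratio := logb_add_sub_logb_add_of_mul_eq_mul (b := 2) h₀ h₁ h₂ h₃ hprod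
  rw [← lam2_add_lam3, logb_div h₀.ne' h₁.ne']
  linear_combination hratio * ((cos θ + sin θ) / 2) - hsum * (cos θ / 2 - r * cos (2 * θ) / 2)

end Eigenvalues

theorem deriv_binEnt_sub_entFour_general (R θ : ℝ)
    (hθ0 : 0 ≤ θ) (hθ : θ ≤ π / 4)
    (h0 : 0 < lam0 θ R ∧ lam0 θ R < 1) (h1 : 0 < lam1 θ R ∧ lam1 θ R < 1)
    (h2 : 0 < lam2 θ R ∧ lam2 θ R < 1) (h3 : 0 < lam3 θ R ∧ lam3 θ R < 1)
    (h01 : lam1 θ R ≤ lam0 θ R) :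
    HasDerivAt (fun r => binEnt (lam0 θ r + lam1 θ r) - entFour θ r)
        (Real.logb 2 (lam0 θ R / lam1 θ R) * (Real.cos θ - Real.sin θ) / 2) R ∧
    0 ≤ Real.logb 2 (lam0 θ R / lam1 θ R) * (Real.cos θ - Real.sin θ) / 2 := by
  refine ⟨hasDerivAt_binEnt_sub_entFour θ R h0.1 h1.1 h2.1 h3.1, ?_⟩
  have hlog : 0 ≤ logb 2 (lam0 θ R / lam1 θ R) :=
    logb_nonneg one_lt_two ((one_le_div h1.1).mpr h01)
  have hcs : 0 ≤ cos θ - sin θ := sub_nonneg.mpr (sin_le_cos_of_nonneg_of_le_pi_div_four hθ0 hθ)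
  positivity

/-- the `R`-derivative of `h(λ₀+λ₁) − H({λᵢ})` equals
`log₂(λ₀/λ₁)·(cos θ − sin θ)/2`, and this is nonnegative for `0 ≤ θ ≤ π/4`
and `λ₀ ≥ λ₁ > 0`. -/
theorem deriv_binEnt_sub_entFour (R θ : ℝ)
    (hR : 1 / Real.sqrt 2 < R) (hR1 : R ≤ 1)
    (hθ0 : 0 ≤ θ) (hθ : θ ≤ π / 4)
    (h0 : 0 < lam0 θ R ∧ lam0 θ R < 1) (h1 : 0 < lam1 θ R ∧ lam1 θ R < 1)
    (h2 : 0 < lam2 θ R ∧ lam2 θ R < 1) (h3 : 0 < lam3 θ R ∧ lam3 θ R < 1)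
    (h01 : lam1 θ R ≤ lam0 θ R) :
    HasDerivAt (fun r => binEnt (lam0 θ r + lam1 θ r) - entFour θ r)
        (Real.logb 2 (lam0 θ R / lam1 θ R) * (Real.cos θ - Real.sin θ) / 2) R ∧
    0 ≤ Real.logb 2 (lam0 θ R / lam1 θ R) * (Real.cos θ - Real.sin θ) / 2 :=
  deriv_binEnt_sub_entFour_general R θ hθ0 hθ h0 h1 h2 h3 h01
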